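/- With P = ℂ[x₁,x₂,x₃], f₁ = 2x₁+x₂x₃, f₂ = 2x₂+x₁x₃, f₃ = x₁x₂, the Koszul map d₂ : P³ → P³, d₂(b₁₂,b₁₃,b₂₃) = (−b₁₂f₂ − b₁₃f₃, b₁₂f₁ − b₂₃f₃, b₁₃f₁ + b₂₃f₂), and the Koszul map d₃ : P → P³, d₃(c) = (c·f₃, −c·f₂, c·f₁), one has ker d₂ = im d₃. (Thus the degree −2 Koszul cohomology of (∂W) for W = x₁²+x₂²+x₁x₂x₃ vanishes.) -/

import Mathlib

/-!
Since `f₁ = 2x₁ + x₂x₃` is a coordinate after the change of variables `x₁ ↦ 2x₁ + x₂x₃`, it is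
prime, and it does not divide `f₃ = x₁x₂` (which is `1` at the zero `(1, 1, -2)` of `f₁`). For a
prime `f₁` not dividing `f₃`, the second component of `d₂ b = 0`, `b₁₂ f₁ = b₂₃ f₃`, forces
`b₂₃ = c f₁`; cancelling `f₁` in the other components then gives `b = d₃ c`.
-/

noncomputable section
open MvPolynomial

/-- `P = ℂ[x₁,x₂,x₃]` with `x₁ = X 0`, `x₂ = X 1`, `x₃ = X 2`. -/
abbrev P : Type := MvPolynomial (Fin 3) ℂ

/-- `f₁ = 2x₁+x₂x₃ = ∂W/∂x₁` for `W = x₁²+x₂²+x₁x₂x₃`. -/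
def f1 : P := 2 * X 0 + X 1 * X 2
/-- `f₂ = 2x₂+x₁x₃`. -/
def f2 : P := 2 * X 1 + X 0 * X 2
/-- `f₃ = x₁x₂`. -/
def f3 : P := X 0 * X 1

/-- Koszul differential `d₂ : P³ → P³`, middle term indexed by `(1,2), (1,3), (2,3)`. -/
def d2 : P × P × P → P × P × P := fun b =>
  (-(b.1 * f2) - b.2.1 * f3, b.1 * f1 - b.2.2 * f3, b.2.1 * f1 + b.2.2 * f2)

/-- Koszul differential `d₃ : P → P³`. -/
def d3 : P → P × P × P := fun c => (c * f3, -(c * f2), c * f1)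

namespace Koszul

variable {R : Type*} [CommRing R] (g₁ g₂ g₃ : R)

def d₂ : R × R × R → R × R × R := fun b =>
  (-(b.1 * g₂) - b.2.1 * g₃, b.1 * g₁ - b.2.2 * g₃, b.2.1 * g₁ + b.2.2 * g₂)

def d₃ : R → R × R × R := fun c => (c * g₃, -(c * g₂), c * g₁)

theorem d₂_d₃ (c : R) : d₂ g₁ g₂ g₃ (d₃ g₁ g₂ g₃ c) = 0 := by
  simp only [d₂, d₃, Prod.ext_iff, Prod.fst_zero, Prod.snd_zero]
  exact ⟨by ring, by ring, by ring⟩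

variable {g₁ g₂ g₃}

theorem exists_eq_d₃_of_d₂_eq_zero [IsDomain R] (h₁ : Prime g₁) (h₁₃ : ¬ g₁ ∣ g₃)
    {b : R × R × R} (hb : d₂ g₁ g₂ g₃ b = 0) : ∃ c, b = d₃ g₁ g₂ g₃ c := by
  obtain ⟨b₁₂, b₁₃, b₂₃⟩ := b
  simp only [d₂, Prod.ext_iff, Prod.fst_zero, Prod.snd_zero] at hb
  obtain ⟨-, e₂, e₃⟩ := hb
  obtain ⟨c, rfl⟩ : g₁ ∣ b₂₃ :=
    (h₁.dvd_or_dvd ⟨b₁₂, by linear_combination -e₂⟩).resolve_right h₁₃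
  refine ⟨c, ?_⟩
  simp only [d₃, Prod.mk.injEq]
  refine ⟨mul_right_cancel₀ h₁.ne_zero ?_, mul_right_cancel₀ h₁.ne_zero ?_, mul_comm _ _⟩
  · linear_combination e₂
  · linear_combination e₃

theorem d₂_eq_zero_iff [IsDomain R] (h₁ : Prime g₁) (h₁₃ : ¬ g₁ ∣ g₃) (b : R × R × R) :
    d₂ g₁ g₂ g₃ b = 0 ↔ ∃ c, b = d₃ g₁ g₂ g₃ c :=
  ⟨exists_eq_d₃_of_d₂_eq_zero h₁ h₁₃, by rintro ⟨c, rfl⟩; exact d₂_d₃ g₁ g₂ g₃ c⟩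

end Koszul

def shearX0 : P ≃ₐ[ℂ] P :=
  AlgEquiv.ofAlgHom (aeval ![2 * X 0 + X 1 * X 2, X 1, X 2])
    (aeval ![C (1 / 2 : ℂ) * (X 0 - X 1 * X 2), X 1, X 2])
    (by
      apply MvPolynomial.algHom_ext; intro i; fin_cases i <;>
        simp [← map_ofNat (C : ℂ →+* P) 2, ← C_mul, mul_comm, mul_left_comm])
    (by
      apply MvPolynomial.algHom_ext; intro i; fin_cases i <;>
        simp [← map_ofNat (C : ℂ →+* P) 2, ← C_mul, mul_comm, mul_assoc, mul_left_comm,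
          mul_sub, sub_mul])

theorem shearX0_X_zero : shearX0 (X 0) = f1 := by
  simp [shearX0, f1]

theorem prime_f1 : Prime f1 := by
  rw [← shearX0_X_zero]
  exact (MulEquiv.prime_iff (shearX0 : P ≃* P)).mpr X_prime

theorem not_f1_dvd_f3 : ¬ f1 ∣ f3 := by
  intro h
  have hf1 : eval ![(1 : ℂ), 1, -2] f1 = 0 := by simp [f1]
  have hf3 : eval ![(1 : ℂ), 1, -2] f3 = 1 := by simp [f3]
  simpa [hf1, hf3] using map_dvd (eval ![(1 : ℂ), 1, -2]) h

theorem stmt17 : ∀ b : P × P × P, d2 b = 0 ↔ ∃ c : P, b = d3 c :=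
  Koszul.d₂_eq_zero_iff prime_f1 not_f1_dvd_f3
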